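/- Let φ = (1+√5)/2 and let c = √(30+6√5)/4. The four points (c,c,c), (c,−c,−c), (−c,c,−c), (−c,−c,c) are pairwise at distance √(15+3√5) (≈ 4.65921), and their convex hull contains the twelve points (0, ±1/2, ±φ/2), (±φ/2, 0, ±1/2), (±1/2, ±φ/2, 0) (the vertices of a regular icosahedron of edge 1); hence a regular tetrahedron whose insphere radius equals the circumradius √(10+2√5)/4 of the unit icosahedron has edge √(15+3√5) and contains the unit icosahedron. -/

import Mathlib

/-- A point of `ℝ³` (as `EuclideanSpace ℝ (Fin 3)`) from its coordinates. -/
noncomputable def pt (x y z : ℝ) : EuclideanSpace ℝ (Fin 3) := WithLp.toLp 2 ![x, y, z]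

/-- The golden ratio. -/
noncomputable def φ : ℝ := (1 + Real.sqrt 5) / 2

/-- The twelve vertices of a regular icosahedron of edge length 1. -/
noncomputable def icoVerts1 : Set (EuclideanSpace ℝ (Fin 3)) :=
  {pt 0 (1 / 2) (φ / 2), pt 0 (1 / 2) (-(φ / 2)), pt 0 (-(1 / 2)) (φ / 2),
   pt 0 (-(1 / 2)) (-(φ / 2)),
   pt (φ / 2) 0 (1 / 2), pt (φ / 2) 0 (-(1 / 2)), pt (-(φ / 2)) 0 (1 / 2),
   pt (-(φ / 2)) 0 (-(1 / 2)),
   pt (1 / 2) (φ / 2) 0, pt (1 / 2) (-(φ / 2)) 0, pt (-(1 / 2)) (φ / 2) 0,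
   pt (-(1 / 2)) (-(φ / 2)) 0}

/-- For `c`, the tetrahedron vertices `(c,c,c)`, `(c,−c,−c)`, `(−c,c,−c)`, `(−c,−c,c)`. -/
noncomputable def tetVert (c : ℝ) : Fin 4 → EuclideanSpace ℝ (Fin 3) :=
  ![pt c c c, pt c (-c) (-c), pt (-c) c (-c), pt (-c) (-c) c]

/-! The tetrahedron with vertices `(c,c,c)`, `(c,−c,−c)`, `(−c,c,−c)`, `(−c,−c,c)` is cut out by the
four facet inequalities `c ± x ± y ± z ≥ 0` with an even number of minus signs, so it contains the
`ℓ¹`-ball `|x| + |y| + |z| ≤ c`. Each icosahedron vertex has `ℓ¹`-norm `(1 + φ)/2 = (3 + √5)/4`, which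
is at most `c = √(30 + 6√5)/4` because `(3 + √5)² = 14 + 6√5`. The edge length of the tetrahedron is
`2√2 c`. -/

open Set

lemma dist_tetVert (c : ℝ) {i j : Fin 4} (hij : i ≠ j) :
    dist (tetVert c i) (tetVert c j) = Real.sqrt (8 * c ^ 2) := by
  rw [EuclideanSpace.dist_eq]
  congr 1
  fin_cases i <;> fin_cases j <;> first
    | exact absurd rfl hij
    | simp [tetVert, pt, Fin.sum_univ_three, Real.dist_eq, sq_abs]; ring

/-- The barycentric coordinates of `(x, y, z)` are the facet values `(c ± x ± y ± z) / 4c`. -/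
lemma pt_mem_convexHull_tetVert_of_facets {c x y z : ℝ} (hc : 0 < c)
    (h₀ : 0 ≤ c + x + y + z) (h₁ : 0 ≤ c + x - y - z) (h₂ : 0 ≤ c - x + y - z)
    (h₃ : 0 ≤ c - x - y + z) :
    pt x y z ∈ convexHull ℝ (range (tetVert c)) := by
  set w : Fin 4 → ℝ :=
    ![(c + x + y + z) / (4 * c), (c + x - y - z) / (4 * c),
      (c - x + y - z) / (4 * c), (c - x - y + z) / (4 * c)] with hw
  have hw_nonneg : ∀ i ∈ Finset.univ, 0 ≤ w i := by
    intro i _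
    fin_cases i <;> simp only [hw, Fin.zero_eta, Fin.mk_one, Fin.reduceFinMk, Matrix.cons_val] <;>
      exact div_nonneg ‹_› (by positivity)
  have hw_sum : ∑ i, w i = 1 := by
    simp only [hw, Fin.sum_univ_four, Matrix.cons_val]
    field_simp
    ring
  have hw_point : ∑ i, w i • tetVert c i = pt x y z := by
    ext k
    rw [WithLp.ofLp_sum, Finset.sum_apply]
    fin_cases k <;> simp [hw, Fin.sum_univ_four, tetVert, pt] <;> field_simp <;> ring
  rw [← hw_point, ← Finset.centerMass_eq_of_sum_1 _ _ hw_sum]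
  exact Finset.centerMass_mem_convexHull _ hw_nonneg (by rw [hw_sum]; exact one_pos)
    fun i _ => mem_range_self i

lemma pt_mem_convexHull_tetVert {c x y z : ℝ} (hc : 0 < c) (h : |x| + |y| + |z| ≤ c) :
    pt x y z ∈ convexHull ℝ (range (tetVert c)) := by
  apply pt_mem_convexHull_tetVert_of_facets hc <;>
    linarith [neg_abs_le x, le_abs_self x, neg_abs_le y, le_abs_self y, neg_abs_le z,
      le_abs_self z]

lemma icoVerts1_subset_convexHull_tetVert {c : ℝ} (hc : 1 / 2 + φ / 2 ≤ c) :
    icoVerts1 ⊆ convexHull ℝ (range (tetVert c)) := by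
  have hφ : 0 ≤ φ / 2 := by unfold φ; positivity
  have hc_pos : 0 < c := by linarith
  intro p hp
  simp only [icoVerts1, mem_insert_iff, mem_singleton_iff] at hp
  rcases hp with rfl | rfl | rfl | rfl | rfl | rfl | rfl | rfl | rfl | rfl | rfl | rfl <;>
    apply pt_mem_convexHull_tetVert hc_pos <;>
    simp only [abs_neg, abs_zero, abs_of_nonneg hφ, abs_of_pos (one_half_pos (α := ℝ))] <;>
    linarith

lemma half_add_half_φ_le : 1 / 2 + φ / 2 ≤ Real.sqrt (30 + 6 * Real.sqrt 5) / 4 := by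
  have h5 : Real.sqrt 5 ^ 2 = 5 := Real.sq_sqrt (by norm_num)
  have h_le_sqrt : 3 + Real.sqrt 5 ≤ Real.sqrt (30 + 6 * Real.sqrt 5) :=
    Real.le_sqrt_of_sq_le (by nlinarith)
  unfold φ
  linarith

theorem circumsphere_tetrahedron_contains_unit_icosahedron :
    (∀ i j, i ≠ j →
      dist (tetVert (Real.sqrt (30 + 6 * Real.sqrt 5) / 4) i)
           (tetVert (Real.sqrt (30 + 6 * Real.sqrt 5) / 4) j)
        = Real.sqrt (15 + 3 * Real.sqrt 5)) ∧
    icoVerts1 ⊆ convexHull ℝ (Set.range (tetVert (Real.sqrt (30 + 6 * Real.sqrt 5) / 4))) := by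
  refine ⟨fun i j hij => ?_, icoVerts1_subset_convexHull_tetVert half_add_half_φ_le⟩
  rw [dist_tetVert _ hij, div_pow, Real.sq_sqrt (by positivity)]
  congr 1
  ring
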